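/- For every temperature 0 < τ ≤ 1 and every margin m > 0, the derivative of the binary self-training loss is strictly negative: ℓ_τ'(m) < 0, where ℓ_τ(m) = −σ(m/τ)·log σ(m) − (1 − σ(m/τ))·log(1 − σ(m)). Consequently, a gradient-descent step on ℓ_τ from any positive margin strictly increases the margin. -/

import Mathlib

open Real

/-- The logistic sigmoid `σ t = 1 / (1 + exp (−t))`. -/
noncomputable def sigmoid (t : ℝ) : ℝ := 1 / (1 + Real.exp (-t))

/-- The binary self-training loss at margin `m` with temperature `τ`:
`ℓ_τ(m) = −σ(m/τ)·log σ(m) − (1 − σ(m/τ))·log (1 − σ(m))`. -/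
noncomputable def selfTrainLoss (τ m : ℝ) : ℝ :=
  -_root_.sigmoid (m / τ) * Real.log (_root_.sigmoid m)
    - (1 - _root_.sigmoid (m / τ)) * Real.log (1 - _root_.sigmoid m)

/-!
Writing `p = σ(m/τ)` and `q = σ(m)`, the identities `σ' = σ(1 − σ)` and
`log q − log (1 − q) = m` collapse the derivative of the loss to
`ℓ_τ'(m) = (q − p) − m·p(1 − p)/τ`.
For `m > 0` and `τ ≤ 1` we have `m/τ ≥ m`, hence `p ≥ q`, and the second term is strictly positive.
-/

theorem sigmoid_eq_real_sigmoid : _root_.sigmoid = Real.sigmoid := by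
  funext t
  rw [_root_.sigmoid, Real.sigmoid_def, one_div]

theorem Real.log_sigmoid_sub_log_one_sub_sigmoid (x : ℝ) :
    Real.log (Real.sigmoid x) - Real.log (1 - Real.sigmoid x) = x := by
  rw [← Real.sigmoid_neg, ← Real.sigmoid_mul_rexp_neg,
    Real.log_mul (Real.sigmoid_pos x).ne' (Real.exp_pos _).ne', Real.log_exp]
  ring

theorem hasDerivAt_selfTrainLoss (τ m : ℝ) :
    HasDerivAt (selfTrainLoss τ)
      (Real.sigmoid m - Real.sigmoid (m / τ)
        - m * (Real.sigmoid (m / τ) * (1 - Real.sigmoid (m / τ)) / τ)) m := by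
  have hq0 : Real.sigmoid m ≠ 0 := (Real.sigmoid_pos m).ne'
  have hq1 : 1 - Real.sigmoid m ≠ 0 := (sub_pos.2 (Real.sigmoid_lt_one m)).ne'
  have hp : HasDerivAt (fun x => Real.sigmoid (x / τ))
      (Real.sigmoid (m / τ) * (1 - Real.sigmoid (m / τ)) * (1 / τ)) m :=
    (Real.hasDerivAt_sigmoid (m / τ)).comp (h := fun x => x / τ) m ((hasDerivAt_id m).div_const τ)
  have hq := Real.hasDerivAt_sigmoid m
  have hloss := (hp.neg.mul (hq.log hq0)).sub ((hp.const_sub 1).mul ((hq.const_sub 1).log hq1))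
  rw [show selfTrainLoss τ = fun x => -Real.sigmoid (x / τ) * Real.log (Real.sigmoid x)
      - (1 - Real.sigmoid (x / τ)) * Real.log (1 - Real.sigmoid x) by
    funext x; simp only [selfTrainLoss, sigmoid_eq_real_sigmoid]]
  refine hloss.congr_deriv ?_
  simp only [Pi.neg_apply]
  field_simp
  linear_combination (-(Real.sigmoid (m / τ) * (1 - Real.sigmoid (m / τ)) / τ))
    * Real.log_sigmoid_sub_log_one_sub_sigmoid m

theorem deriv_selfTrainLoss_neg {τ m : ℝ} (hτ0 : 0 < τ) (hτ1 : τ ≤ 1) (hm : 0 < m) :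
    deriv (selfTrainLoss τ) m < 0 := by
  rw [(hasDerivAt_selfTrainLoss τ m).deriv]
  have hqp : Real.sigmoid m ≤ Real.sigmoid (m / τ) :=
    Real.sigmoid_le (le_div_self hm.le hτ0 hτ1)
  have hslope : 0 < m * (Real.sigmoid (m / τ) * (1 - Real.sigmoid (m / τ)) / τ) :=
    mul_pos hm (div_pos (mul_pos (Real.sigmoid_pos _) (sub_pos.2 (Real.sigmoid_lt_one _))) hτ0)
  linarith

/-- For `0 < τ ≤ 1` and margin `m > 0`, the derivative of the binary self-training loss is
strictly negative; consequently a gradient-descent step `m − η·ℓ_τ'(m)` with step size `η > 0`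
strictly increases the margin. -/
theorem stmt8 (τ : ℝ) (hτ0 : 0 < τ) (hτ1 : τ ≤ 1) (m : ℝ) (hm : 0 < m) :
    deriv (selfTrainLoss τ) m < 0 ∧
      ∀ η : ℝ, 0 < η → m < m - η * deriv (selfTrainLoss τ) m := by
  have hneg := deriv_selfTrainLoss_neg hτ0 hτ1 hm
  exact ⟨hneg, fun η hη => by linarith [mul_neg_of_pos_of_neg hη hneg]⟩
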